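/- Let 𝔸 be an infinite type with decidable equality, fix a ∈ 𝔸, let φ be a proposition, and define ā := {x ∈ 𝔸 | (x = a ∧ φ) ∨ x ≠ a} ⊆ 𝔸, with finitary permutations acting on subsets of 𝔸 by direct image. Then π · ā = ā for every finitary permutation π if and only if φ holds. -/

import Mathlib

/-!
If `φ` holds the set is all of `𝔸`, which every permutation fixes. Otherwise it is `{a}ᶜ`, and a
transposition `(a b)` with `b ≠ a` moves it to `{b}ᶜ`.
-/

/-- The subgroup of finitary permutations of `𝔸`: permutations moving
only finitely many elements. -/
def FinPerm (𝔸 : Type*) : Subgroup (Equiv.Perm 𝔸) where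
  carrier := {π : Equiv.Perm 𝔸 | {a | π a ≠ a}.Finite}
  one_mem' := by simp
  mul_mem' := by
    intro π σ hπ hσ
    refine (hπ.union hσ).subset ?_
    intro a ha
    by_contra h
    simp only [Set.mem_union, Set.mem_setOf_eq, not_or, not_not] at h
    exact ha (by simp [Equiv.Perm.mul_apply, h.1, h.2])
  inv_mem' := by
    intro π hπ
    refine hπ.subset ?_
    intro a ha
    simp only [Set.mem_setOf_eq] at *
    intro h
    exact ha (by nth_rewrite 1 [← h]; first | exact Equiv.Perm.apply_inv_self π a | simp)

/-- `A` supports `x`: every finitary permutation fixing `A` pointwise fixes `x`. -/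
def NSupports (𝔸 : Type*) {X : Type*} [MulAction (FinPerm 𝔸) X] (A : Set 𝔸) (x : X) : Prop :=
  ∀ π : FinPerm 𝔸, (∀ a ∈ A, π.1 a = a) → π • x = x

theorem swap_mem_finPerm {𝔸 : Type*} [DecidableEq 𝔸] (a b : 𝔸) :
    Equiv.swap a b ∈ FinPerm 𝔸 :=
  (Set.toFinite {a, b}).subset fun _ hx ↦ Equiv.swap_apply_ne_self_iff.mp hx |>.2

theorem exists_finPerm_image_compl_singleton_ne {𝔸 : Type*} [Nontrivial 𝔸] (a : 𝔸) :
    ∃ π : FinPerm 𝔸, π.1 '' {a}ᶜ ≠ {a}ᶜ := by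
  classical
  obtain ⟨b, hb⟩ := exists_ne a
  refine ⟨⟨Equiv.swap a b, swap_mem_finPerm a b⟩, ?_⟩
  rw [Set.image_compl_eq (Equiv.bijective _), Set.image_singleton, Equiv.swap_apply_left,
    Ne, compl_inj_iff, Set.singleton_eq_singleton_iff]
  exact hb

theorem stmt_10_general {𝔸 : Type*} [Infinite 𝔸] (a : 𝔸) (φ : Prop) :
    (∀ π : FinPerm 𝔸, π.1 '' {x : 𝔸 | (x = a ∧ φ) ∨ x ≠ a} = {x : 𝔸 | (x = a ∧ φ) ∨ x ≠ a})
      ↔ φ := by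
  by_cases hφ : φ
  · have huniv : {x : 𝔸 | (x = a ∧ φ) ∨ x ≠ a} = Set.univ := by
      ext x; simp [hφ, em]
    refine iff_of_true (fun π ↦ ?_) hφ
    rw [huniv, Set.image_univ, Equiv.range_eq_univ]
  · have hcompl : {x : 𝔸 | (x = a ∧ φ) ∨ x ≠ a} = {a}ᶜ := by
      ext x; simp [hφ]
    obtain ⟨π, hπ⟩ := exists_finPerm_image_compl_singleton_ne a
    refine iff_of_false (fun h ↦ hπ ?_) hφ
    rw [← hcompl]
    exact h π

theorem stmt_10 {𝔸 : Type*} [Infinite 𝔸] [DecidableEq 𝔸] (a : 𝔸) (φ : Prop) :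
    (∀ π : FinPerm 𝔸, π.1 '' {x : 𝔸 | (x = a ∧ φ) ∨ x ≠ a} = {x : 𝔸 | (x = a ∧ φ) ∨ x ≠ a})
      ↔ φ :=
  stmt_10_general a φ
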